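/- If q is a homogeneous polynomial vector field of degree k on ℝ^d with div sym(q x^T) = 0, then q = 0. In the proof one uses the identity 2 div sym(q x^T) = (k+d+1)q + (div q)x. -/

import Mathlib

/-!
Expanding with the Leibniz rule and Euler's identity gives
`2 div sym(q xᵀ) = (k + d + 1) q + (div q) x`. If this vanishes, taking the divergence once more
gives `(2k + 2d) div q = 0` (Euler again, `div q` being homogeneous of degree `k - 1`), so
`div q = 0` and then `(k + d + 1) q = 0`.
-/

open MvPolynomial Finset

/-- The symmetric part of the tensor product `q(x) xᵀ`, as a matrix-valued polynomial field. -/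
noncomputable def symQX (d : ℕ) (q : Fin d → MvPolynomial (Fin d) ℝ) :
    Fin d → Fin d → MvPolynomial (Fin d) ℝ :=
  fun i j => C (2⁻¹ : ℝ) * (q i * X j + X i * q j)

/-- The row-wise divergence of a matrix-valued polynomial field. -/
noncomputable def matDiv (d : ℕ) (τ : Fin d → Fin d → MvPolynomial (Fin d) ℝ) :
    Fin d → MvPolynomial (Fin d) ℝ :=
  fun i => ∑ j : Fin d, pderiv j (τ i j)

namespace MvPolynomial

variable {σ R : Type*} [Fintype σ] [CommSemiring R]

noncomputable def divergence : (σ → MvPolynomial σ R) →ₗ[R] MvPolynomial σ R :=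
  ∑ i, (pderiv i).toLinearMap ∘ₗ LinearMap.proj i

theorem divergence_apply (v : σ → MvPolynomial σ R) : divergence v = ∑ i, pderiv i (v i) := by
  simp [divergence]

theorem IsHomogeneous.divergence {v : σ → MvPolynomial σ R} {k : ℕ}
    (hv : ∀ i, (v i).IsHomogeneous k) : (divergence v).IsHomogeneous (k - 1) := by
  rw [divergence_apply]
  exact IsHomogeneous.sum _ _ _ fun i _ => (hv i).pderiv

theorem divergence_mul_X {p : MvPolynomial σ R} {m : ℕ} (hp : p.IsHomogeneous m) :
    divergence (fun j => p * X j) = (Fintype.card σ + m) • p := by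
  simp only [divergence_apply, pderiv_mul, pderiv_X_self, one_mul, sum_add_distrib, sum_const,
    card_univ, mul_comm _ (X _), hp.sum_X_mul_pderiv, add_smul]

theorem divergence_X_mul [DecidableEq σ] (i : σ) (v : σ → MvPolynomial σ R) :
    divergence (fun j => X i * v j) = v i + X i * divergence v := by
  simp [divergence_apply, pderiv_X, Pi.single_apply, sum_add_distrib, mul_sum, add_comm]

theorem divergence_mul_X_add_X_mul {q : σ → MvPolynomial σ R} {k : ℕ}
    (hq : ∀ j, (q j).IsHomogeneous k) (i : σ) :
    divergence (fun j => q i * X j + X i * q j)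
      = (k + Fintype.card σ + 1) • q i + X i * divergence q := by
  classical
  rw [show (fun j => q i * X j + X i * q j) = (fun j => q i * X j) + fun j => X i * q j from rfl,
    map_add, divergence_mul_X (hq i), divergence_X_mul]
  simp only [add_smul, one_smul]
  abel

theorem divergence_nsmul_add_X_mul_divergence {q : σ → MvPolynomial σ R} {k : ℕ}
    (hq : ∀ j, (q j).IsHomogeneous k) (n : ℕ) :
    divergence (fun i => n • q i + X i * divergence q)
      = (n + Fintype.card σ + (k - 1)) • divergence q := by
  simp_rw [mul_comm (X _)]
  rw [show (fun i => n • q i + divergence q * X i) = n • q + fun i => divergence q * X i from rfl,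
    map_add, map_nsmul, divergence_mul_X (IsHomogeneous.divergence hq), ← add_smul, add_assoc]

end MvPolynomial

theorem matDiv_eq_divergence (d : ℕ) (τ : Fin d → Fin d → MvPolynomial (Fin d) ℝ) (i : Fin d) :
    matDiv d τ i = divergence (τ i) :=
  (divergence_apply _).symm

theorem two_smul_matDiv_symQX {d k : ℕ} {q : Fin d → MvPolynomial (Fin d) ℝ}
    (hq : ∀ i, (q i).IsHomogeneous k) (i : Fin d) :
    (2 : ℝ) • matDiv d (symQX d q) i = (k + d + 1) • q i + X i * divergence q := by
  have hsym : symQX d q i = (2⁻¹ : ℝ) • fun j => q i * X j + X i * q j := by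
    ext1 j
    simp [symQX, smul_eq_C_mul, mul_add]
  rw [matDiv_eq_divergence, hsym, map_smul, smul_smul, mul_inv_cancel₀ two_ne_zero, one_smul,
    divergence_mul_X_add_X_mul hq, Fintype.card_fin]

theorem stmt_9_general (d k : ℕ) (q : Fin d → MvPolynomial (Fin d) ℝ)
    (hq : ∀ i, (q i).IsHomogeneous k)
    (h : matDiv d (symQX d q) = 0) : q = 0 := by
  have hrow : ∀ i, (k + d + 1) • q i + X i * divergence q = 0 := fun i => by
    rw [← two_smul_matDiv_symQX hq, h, Pi.zero_apply, smul_zero]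
  have hdiv : divergence q = 0 := by
    have h2 := congrArg divergence (funext hrow : (fun i => _) = 0)
    rw [divergence_nsmul_add_X_mul_divergence hq, map_zero, Fintype.card_fin] at h2
    exact (nsmul_eq_zero_iff_right (by omega)).mp h2
  funext i
  have hqi := hrow i
  rw [hdiv, mul_zero, add_zero] at hqi
  exact (nsmul_eq_zero_iff_right (by omega)).mp hqi

/-- If `q` is a homogeneous polynomial vector field of degree `k` with
`div sym(q xᵀ) = 0`, then `q = 0`. -/
theorem stmt_9 (d k : ℕ) (hd : 1 ≤ d) (q : Fin d → MvPolynomial (Fin d) ℝ)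
    (hq : ∀ i, (q i).IsHomogeneous k)
    (h : matDiv d (symQX d q) = 0) : q = 0 :=
  stmt_9_general d k q hq h
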